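/- For any arithmetic function r and any L, T ≥ 3 satisfying L ≤ T/(log T)², one has ∫_{−∞}^{∞} |R_L(1/2 + it)|² Φ_T(t) dt = Φ̂_T(0)·(1 + O(1/T))·∑_{n ≤ L} |r(n)|²/n. -/

import Mathlib

open MeasureTheory Filter Finset
open scoped Real ComplexConjugate Classical

noncomputable section


/-- The Gaussian weight `Φ(t) = e^{-t²/2}`. -/
def Phi (t : ℝ) : ℝ := Real.exp (-t ^ 2 / 2)

/-- The smooth weight `Φ_T(t) = Φ((t - 3T/2)/(T/log T))`. -/
def PhiT (T t : ℝ) : ℝ := Phi ((t - 3 * T / 2) / (T / Real.log T))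

/-- `Φ̂_T(0) = ∫_ℝ Φ_T(t) dt`. -/
def PhiHat0 (T : ℝ) : ℝ := ∫ t : ℝ, PhiT T t

/-- The resonator Dirichlet polynomial `R_L(s) = ∑_{n ≤ L} r(n) n^{-s}`. -/
def RL (r : ℕ → ℂ) (L : ℝ) (s : ℂ) : ℂ :=
  ∑ n ∈ Icc 1 ⌊L⌋₊, r n * (n : ℂ) ^ (-s)

/-- The approximator Dirichlet polynomial `A_X(s) = ∑_{n ≤ X} a(n) n^{-s}`. -/
def AX (a : ℕ → ℂ) (X : ℝ) (s : ℂ) : ℂ :=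
  ∑ n ∈ Icc 1 ⌊X⌋₊, a n * (n : ℂ) ^ (-s)

/-- `g_h(k)`: the `k`-th Dirichlet coefficient of `log ζ(s + ih/2) - log ζ(s - ih/2)`;
`g_h(1) = 0` and `g_h(k) = -2i Λ(k) sin((h/2) log k)/log k` for `k ≥ 2`.
(The formula below gives `0` at `k = 0, 1` since `Λ(k) = 0` there.) -/
def gh (h : ℝ) (k : ℕ) : ℂ :=
  -2 * Complex.I * (ArithmeticFunction.vonMangoldt k : ℝ) *
    (Real.sin (h / 2 * Real.log k) : ℝ) / (Real.log k : ℝ)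

/-- The zero-counting function `N(T)`: the number of zeros `ρ = β + iγ` of `ζ` with
`0 < γ < |T|`, with the convention `N(T) = (N(T⁺) + N(T⁻))/2` at jump points, i.e.
zeros with ordinate exactly `|T|` are counted with weight `1/2`. -/
def Nzeros (T : ℝ) : ℝ :=
  (({ρ : ℂ | riemannZeta ρ = 0 ∧ 0 < ρ.re ∧ ρ.re < 1 ∧ 0 < ρ.im ∧ ρ.im < |T|}).ncard : ℝ) +
  (1 / 2) * (({ρ : ℂ | riemannZeta ρ = 0 ∧ 0 < ρ.re ∧ ρ.re < 1 ∧ ρ.im = |T|}).ncard : ℝ)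

/-- `N_h(t) = N(t + h/2) - N(t - h/2)`. -/
def Nh (h t : ℝ) : ℝ := Nzeros (t + h / 2) - Nzeros (t - h / 2)

/-- `log ζ(σ + it) = ∫_∞^σ (ζ'/ζ)(α + it) dα` (for generic `t`). -/
def logZetaAux (σ t : ℝ) : ℂ :=
  -∫ α in Set.Ioi σ, deriv riemannZeta (α + t * Complex.I) / riemannZeta (α + t * Complex.I)

/-- The branch of `log ζ` used throughout: `log ζ(σ + it) = ∫_∞^σ (ζ'/ζ)(α + it) dα`
when `t` is neither `0` nor the imaginary part of a zero of `ζ`, and the average of the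
two one-sided limits otherwise. -/
def logZeta (s : ℂ) : ℂ :=
  if s.im ≠ 0 ∧ ∀ ρ : ℂ, riemannZeta ρ = 0 → ρ.im ≠ s.im then logZetaAux s.re s.im
  else
    (limUnder (nhdsWithin s.im (Set.Ioi s.im)) (fun t : ℝ => logZetaAux s.re t) +
      limUnder (nhdsWithin s.im (Set.Iio s.im)) (fun t : ℝ => logZetaAux s.re t)) / 2

/-- `S(t) = (1/π) Im log ζ(1/2 + it)`. -/
def Sfun (t : ℝ) : ℝ := (1 / Real.pi) * (logZeta (1 / 2 + t * Complex.I)).im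

/-- `M₁(T, h; R_L) = ∫ N_h(t) |R_L(1/2 + it)|² Φ_T(t) dt`. -/
def M1 (r : ℕ → ℂ) (T h L : ℝ) : ℝ :=
  ∫ t : ℝ, Nh h t * ‖RL r L (1 / 2 + t * Complex.I)‖ ^ 2 * PhiT T t

/-- `M₂(T, h; R_L) = ∫ N_h(t)² |R_L(1/2 + it)|² Φ_T(t) dt`. -/
def M2 (r : ℕ → ℂ) (T h L : ℝ) : ℝ :=
  ∫ t : ℝ, Nh h t ^ 2 * ‖RL r L (1 / 2 + t * Complex.I)‖ ^ 2 * PhiT T t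

/-- `∑_{n ≤ L} |r(n)|²/n`. -/
def S1 (r : ℕ → ℂ) (L : ℝ) : ℝ := ∑ n ∈ Icc 1 ⌊L⌋₊, ‖r n‖ ^ 2 / n

/-- `∑_{km ≤ L} (g_h(k)/k) (r(m) conj(r(km))/m)`. -/
def sumKM (h : ℝ) (r : ℕ → ℂ) (L : ℝ) : ℂ :=
  ∑ p ∈ (Icc 1 ⌊L⌋₊ ×ˢ Icc 1 ⌊L⌋₊).filter (fun p => p.1 * p.2 ≤ ⌊L⌋₊),
    gh h p.1 / (p.1 : ℂ) * (r p.2 * conj (r (p.1 * p.2)) / (p.2 : ℂ))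

/-- `∑_{km, ln ≤ L, km = ln} ((2g_h(k) - a(k)) conj(a(l))/√(kl)) (r(m) conj(r(n))/√(mn))`;
the index is `q = ((k, m), (l, n))`. -/
def sumDiag (h : ℝ) (a r : ℕ → ℂ) (L : ℝ) : ℂ :=
  ∑ q ∈ ((Icc 1 ⌊L⌋₊ ×ˢ Icc 1 ⌊L⌋₊) ×ˢ (Icc 1 ⌊L⌋₊ ×ˢ Icc 1 ⌊L⌋₊)).filter
      (fun q => q.1.1 * q.1.2 ≤ ⌊L⌋₊ ∧ q.2.1 * q.2.2 ≤ ⌊L⌋₊ ∧ q.1.1 * q.1.2 = q.2.1 * q.2.2),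
    (2 * gh h q.1.1 - a q.1.1) * conj (a q.2.1) /
        ((Real.sqrt ((q.1.1 * q.2.1 : ℕ) : ℝ) : ℝ) : ℂ) *
      (r q.1.2 * conj (r q.2.2) / ((Real.sqrt ((q.1.2 * q.2.2 : ℕ) : ℝ) : ℝ) : ℂ))

/-- `∑_{klm ≤ L} (g_h(k) g_h(l)/(kl)) (r(m) conj(r(klm))/m)`; the index is `q = (k, l, m)`. -/
def sumTriple (h : ℝ) (r : ℕ → ℂ) (L : ℝ) : ℂ :=
  ∑ q ∈ (Icc 1 ⌊L⌋₊ ×ˢ Icc 1 ⌊L⌋₊ ×ˢ Icc 1 ⌊L⌋₊).filter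
      (fun q => q.1 * q.2.1 * q.2.2 ≤ ⌊L⌋₊),
    gh h q.1 * gh h q.2.1 / ((q.1 : ℂ) * (q.2.1 : ℂ)) *
      (r q.2.2 * conj (r (q.1 * q.2.1 * q.2.2)) / (q.2.2 : ℂ))

/-- `𝓘(T, h; R_L)`. -/
def calI (r : ℕ → ℂ) (T h L : ℝ) : ℝ :=
  ∫ t : ℝ,
    ‖logZeta (1 / 2 + (t + h / 2) * Complex.I) -
        logZeta (1 / 2 + (t - h / 2) * Complex.I)‖ ^ 2 *
      ‖RL r L (1 / 2 + t * Complex.I)‖ ^ 2 * PhiT T t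

/-- `𝓙(T, h; R_L)`. -/
def calJ (r : ℕ → ℂ) (T h L : ℝ) : ℂ :=
  ∫ t : ℝ,
    (logZeta (1 / 2 + (t + h / 2) * Complex.I) -
        logZeta (1 / 2 + (t - h / 2) * Complex.I)) ^ 2 *
      ((‖RL r L (1 / 2 + t * Complex.I)‖ ^ 2 : ℝ) : ℂ) * ((PhiT T t : ℝ) : ℂ)

/-- `𝓘₁(T; R_L, A)`. -/
def calI1 (a r : ℕ → ℂ) (T L : ℝ) : ℝ :=
  ∫ t : ℝ,
    ‖∑ n ∈ Icc 1 ⌊L⌋₊,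
        AX a (L / n) (1 / 2 + t * Complex.I) * r n *
          (n : ℂ) ^ (-(1 / 2 : ℂ) - t * Complex.I)‖ ^ 2 * PhiT T t

/-- `𝓘₂(T, h; R_L, A)`. -/
def calI2 (a r : ℕ → ℂ) (T h L : ℝ) : ℂ :=
  ∑ p ∈ Icc 1 ⌊L⌋₊ ×ˢ Icc 1 ⌊L⌋₊,
    r p.1 * conj (r p.2) / ((Real.sqrt ((p.1 * p.2 : ℕ) : ℝ) : ℝ) : ℂ) *
      ∫ t : ℝ,
        (logZeta (1 / 2 + (t + h / 2) * Complex.I) -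
            logZeta (1 / 2 + (t - h / 2) * Complex.I)) *
          conj (AX a (L / p.2) (1 / 2 + t * Complex.I)) *
          ((p.1 : ℂ) / (p.2 : ℂ)) ^ (-(t : ℂ) * Complex.I) * ((PhiT T t : ℝ) : ℂ)


/-- `I_f(ℓ) = ∫₀¹ f(u)² u^{ℓ²-1} du`. -/
def If (f : ℝ → ℝ) (ℓ : ℝ) : ℝ := ∫ u in (0:ℝ)..1, f u ^ 2 * u ^ (ℓ ^ 2 - 1)

/-- The quantity `𝓜_{ℓ,f}(φ)` of Theorem 2. -/
def Mlf (ℓ : ℝ) (f : ℝ → ℝ) (φ : ℝ) : ℝ :=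
  |1 - 2 * φ| * (2 / Real.pi) * ℓ *
      ∫ u in (0:ℝ)..1, (Real.sin (Real.pi * φ * u) / u) *
        ∫ v in (0:ℝ)..(1 - u), f v * f (u + v) * v ^ (ℓ ^ 2 - 1)
    + (2 / Real.pi ^ 2) * ℓ ^ 2 *
      ∫ u₁ in (0:ℝ)..1, (Real.sin (Real.pi * φ * u₁) / u₁) *
        ∫ u₂ in (0:ℝ)..(1 - u₁), (Real.sin (Real.pi * φ * u₂) / u₂) *
          ∫ v in (0:ℝ)..(1 - (u₁ + u₂)),
            (f v * f (u₁ + u₂ + v) + f (u₁ + v) * f (u₂ + v)) * v ^ (ℓ ^ 2 - 1)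
    + (2 / Real.pi ^ 2) *
      ∫ u in (0:ℝ)..1, (Real.sin (Real.pi * φ * u) ^ 2 / u) *
        ∫ v in (0:ℝ)..(1 - u), f v ^ 2 * v ^ (ℓ ^ 2 - 1)

/-- The generalized divisor function `d_ℓ`, the multiplicative function with
`d_ℓ(p^a) = Γ(a + ℓ)/(Γ(ℓ) Γ(a + 1))`. -/
def dGen (ℓ : ℝ) (n : ℕ) : ℝ :=
  ∏ p ∈ n.primeFactors,
    Real.Gamma ((n.factorization p : ℝ) + ℓ) /
      (Real.Gamma ℓ * Real.Gamma ((n.factorization p : ℝ) + 1))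

/-- The Liouville function `λ(n) = (-1)^{Ω(n)}`. -/
def liouville (n : ℕ) : ℝ := (-1 : ℝ) ^ (ArithmeticFunction.cardFactors n)

/-- The Fourier transform `V̂(z) = ∫ V(x) e^{-2πixz} dx` (of the restriction to ℝ). -/
def Fhat (V : ℂ → ℂ) (z : ℂ) : ℂ :=
  ∫ x : ℝ, V x * Complex.exp (-2 * Real.pi * Complex.I * x * z)

/-- The integral over the contour `C(α)`, which starts from the origin, proceeds along the
real axis to `α`, encircles `α` once counterclockwise, and returns to the origin along the
same path.  For a function `g` with a fixed branch off the real axis this equals the integral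
of the difference of the two one-sided (lower minus upper) limit values along `[0, α]`,
the circle around `α` contributing nothing in the limit of vanishing radius. -/
def contourIntegralC (α : ℝ) (g : ℂ → ℂ) : ℂ :=
  ∫ x in (0:ℝ)..α,
    (limUnder (nhdsWithin (0:ℝ) (Set.Iio 0)) (fun ε : ℝ => g (x + ε * Complex.I)) -
      limUnder (nhdsWithin (0:ℝ) (Set.Ioi 0)) (fun ε : ℝ => g (x + ε * Complex.I)))

/-- `𝓝(T, h, L; a, r)`; the real parameter `c` is the `O(h)` quantity appearing in its
first term. -/
def calN (a r : ℕ → ℂ) (T h L c : ℝ) : ℝ :=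
  -(1 - h / Real.pi * Real.log T + c) * (1 / Real.pi) * (sumKM h r L).im +
    (1 / (2 * Real.pi ^ 2)) * (sumDiag h a r L).re -
    (1 / (2 * Real.pi ^ 2)) * (sumTriple h r L).re

/-- `∑_{km, ln ≤ L, km = ln} (a(k) conj(a(l))/√(kl)) (r(m) conj(r(n))/√(mn))`. -/
def sumDiagAA (a r : ℕ → ℂ) (L : ℝ) : ℂ :=
  ∑ q ∈ ((Icc 1 ⌊L⌋₊ ×ˢ Icc 1 ⌊L⌋₊) ×ˢ (Icc 1 ⌊L⌋₊ ×ˢ Icc 1 ⌊L⌋₊)).filter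
      (fun q => q.1.1 * q.1.2 ≤ ⌊L⌋₊ ∧ q.2.1 * q.2.2 ≤ ⌊L⌋₊ ∧ q.1.1 * q.1.2 = q.2.1 * q.2.2),
    a q.1.1 * conj (a q.2.1) / ((Real.sqrt ((q.1.1 * q.2.1 : ℕ) : ℝ) : ℝ) : ℂ) *
      (r q.1.2 * conj (r q.2.2) / ((Real.sqrt ((q.1.2 * q.2.2 : ℕ) : ℝ) : ℝ) : ℂ))

/-- `∑_{km, ln ≤ L, km = ln} (g_h(k) conj(a(l))/√(kl)) (r(m) conj(r(n))/√(mn))`. -/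
def sumDiagGA (h : ℝ) (a r : ℕ → ℂ) (L : ℝ) : ℂ :=
  ∑ q ∈ ((Icc 1 ⌊L⌋₊ ×ˢ Icc 1 ⌊L⌋₊) ×ˢ (Icc 1 ⌊L⌋₊ ×ˢ Icc 1 ⌊L⌋₊)).filter
      (fun q => q.1.1 * q.1.2 ≤ ⌊L⌋₊ ∧ q.2.1 * q.2.2 ≤ ⌊L⌋₊ ∧ q.1.1 * q.1.2 = q.2.1 * q.2.2),
    gh h q.1.1 * conj (a q.2.1) / ((Real.sqrt ((q.1.1 * q.2.1 : ℕ) : ℝ) : ℝ) : ℂ) *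
      (r q.1.2 * conj (r q.2.2) / ((Real.sqrt ((q.1.2 * q.2.2 : ℕ) : ℝ) : ℝ) : ℂ))

/-- The quantity `𝓩(v; V)` of Lemma `lem_STF_Sv`, a sum over the zeros `ρ = β + iγ` of
`ζ` with `β > 1/2`. -/
def calZ (v : ℝ) (V : ℂ → ℂ) : ℂ :=
  (∑' ρ : {ρ : ℂ // riemannZeta ρ = 0 ∧ 1 / 2 < ρ.re},
    contourIntegralC (ρ.1.re - 1 / 2) fun w =>
      (logZeta (1 / 2 + (ρ.1.im : ℂ) * Complex.I + w) -
          logZeta (1 / 2 + ((ρ.1.im - v : ℝ) : ℂ) * Complex.I + w)) ^ 2 *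
        V (((ρ.1.im - v / 2 : ℝ) : ℂ) - Complex.I * w)) +
  ∑' ρ : {ρ : ℂ // riemannZeta ρ = 0 ∧ 1 / 2 < ρ.re},
    contourIntegralC (ρ.1.re - 1 / 2) fun w =>
      (logZeta (1 / 2 + ((ρ.1.im + v : ℝ) : ℂ) * Complex.I + w) -
          logZeta (1 / 2 + (ρ.1.im : ℂ) * Complex.I + w)) ^ 2 *
        V (((ρ.1.im + v / 2 : ℝ) : ℂ) - Complex.I * w)

/-- The quantity `𝓟(v; V)` of Lemma `lem_STF_Sv`. -/
def calP (v : ℝ) (V : ℂ → ℂ) : ℂ :=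
  contourIntegralC (1 / 2) (fun w =>
    (logZeta (1 / 2 + w) - logZeta (1 / 2 - (v : ℂ) * Complex.I + w)) ^ 2 *
      V ((-(v / 2) : ℝ) - Complex.I * w)) +
  contourIntegralC (1 / 2) (fun w =>
    (logZeta (1 / 2 + (v : ℂ) * Complex.I + w) - logZeta (1 / 2 + w)) ^ 2 *
      V (((v / 2) : ℝ) - Complex.I * w))



section RLMeanSquareAux

open Complex

private lemma rlms_hw_aux (σ μ θ : ℝ) (hσ : σ ≠ 0) :
    ((-(μ^2/(2*σ^2)) : ℝ) : ℂ) - (((μ/σ^2 : ℝ):ℂ) + (θ:ℂ)*Complex.I)^2 /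
      (4 * ((-(1/(2*σ^2)) : ℝ):ℂ)) = ((-(σ^2*θ^2/2) : ℝ):ℂ) + ((μ*θ : ℝ):ℂ)*Complex.I := by
  have hσ' : (σ:ℂ) ≠ 0 := by exact_mod_cast hσ
  push_cast
  field_simp
  ring_nf
  rw [Complex.I_sq]
  ring

private lemma rlms_term_aux (σ μ : ℝ) (hσ : σ ≠ 0) (m n : ℕ) (hm : 1 ≤ m) (hn : 1 ≤ n)
    (t : ℝ) :
    (m:ℂ)^(-(1/2 + (t:ℂ)*Complex.I)) * (starRingEnd ℂ) ((n:ℂ)^(-(1/2 + (t:ℂ)*Complex.I))) *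
      ((Real.exp (-((t - μ)/σ)^2/2) : ℝ) : ℂ) =
    Complex.exp (((-(Real.log m + Real.log n)/2 : ℝ) : ℂ)) *
      Complex.exp (((-(1/(2*σ^2)) : ℝ):ℂ) * (t:ℂ)^2 +
        (((μ/σ^2 : ℝ):ℂ) + ((Real.log n - Real.log m : ℝ):ℂ)*Complex.I) * (t:ℂ) +
        ((-(μ^2/(2*σ^2)) : ℝ):ℂ)) := by
  have hm0 : (m:ℂ) ≠ 0 := Nat.cast_ne_zero.mpr (by omega)
  have hn0 : (n:ℂ) ≠ 0 := Nat.cast_ne_zero.mpr (by omega)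
  rw [cpow_def_of_ne_zero hm0, cpow_def_of_ne_zero hn0, ← Complex.natCast_log,
    ← Complex.natCast_log, ← Complex.exp_conj, Complex.ofReal_exp,
    ← Complex.exp_add, ← Complex.exp_add, ← Complex.exp_add]
  congr 1
  have key : -((t - μ)/σ)^2/2 = (-(1/(2*σ^2))) * t^2 + (μ/σ^2) * t + (-(μ^2/(2*σ^2))) := by
    field_simp; ring
  have keyC : ((-((t - μ)/σ)^2/2 : ℝ) : ℂ) = ((-(1/(2*σ^2)) : ℝ):ℂ) * (t:ℂ)^2 +
      ((μ/σ^2:ℝ):ℂ) * (t:ℂ) + ((-(μ^2/(2*σ^2)):ℝ):ℂ) := by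
    rw [key]; push_cast; ring
  simp only [map_mul, map_neg, map_add, Complex.conj_ofReal, Complex.conj_I, map_div₀,
    map_ofNat, map_one]
  linear_combination (norm := (push_cast; ring)) keyC

private lemma rlms_phi_aux (σ μ t : ℝ) (hσ : σ ≠ 0) :
    ((Real.exp (-((t - μ)/σ)^2/2) : ℝ) : ℂ) =
      Complex.exp (((-(1/(2*σ^2)) : ℝ):ℂ) * (t:ℂ)^2 + ((μ/σ^2 : ℝ):ℂ) * (t:ℂ) +
        ((-(μ^2/(2*σ^2)) : ℝ):ℂ)) := by
  rw [Complex.ofReal_exp]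
  congr 1
  have key : -((t - μ)/σ)^2/2 = (-(1/(2*σ^2))) * t^2 + (μ/σ^2) * t + (-(μ^2/(2*σ^2))) := by
    field_simp; ring
  rw [key]; push_cast; ring

private lemma rlms_logsep {m n N : ℕ} (hm : m ∈ Finset.Icc 1 N) (hn : n ∈ Finset.Icc 1 N)
    (hlt : m < n) : 1/(N:ℝ) ≤ Real.log n - Real.log m := by
  simp only [Finset.mem_Icc] at hm hn
  have hm0 : (0:ℝ) < m := by exact_mod_cast hm.1
  have hn0 : (0:ℝ) < n := by exact_mod_cast hn.1
  have h1 : Real.log ((m:ℝ)/n) ≤ (m:ℝ)/n - 1 := Real.log_le_sub_one_of_pos (by positivity)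
  rw [Real.log_div (ne_of_gt hm0) (ne_of_gt hn0)] at h1
  have hmn : ((1:ℝ) + m)/n ≤ 1 := by
    rw [div_le_one hn0]
    have : 1 + m ≤ n := by omega
    exact_mod_cast this
  rw [add_div] at hmn
  have h4 : 1/(N:ℝ) ≤ 1/(n:ℝ) := by
    apply one_div_le_one_div_of_le hn0
    exact_mod_cast hn.2
  linarith

end RLMeanSquareAux

set_option maxHeartbeats 1000000 in
/-- **Lemma (mean square of the resonator).** -/
theorem RL_mean_square :
    ∃ C > 0, ∀ (r : ℕ → ℂ) (L T : ℝ), 3 ≤ L → 3 ≤ T → L ≤ T / Real.log T ^ 2 →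
      ∃ c : ℝ, |c| ≤ C / T ∧
        (∫ t : ℝ, ‖RL r L (1 / 2 + t * Complex.I)‖ ^ 2 * PhiT T t) =
          PhiHat0 T * (1 + c) * S1 r L := by
  refine ⟨Real.exp (9/2), Real.exp_pos _, fun r L T hL hT hLT => ?_⟩
  have hT0 : (0:ℝ) < T := by linarith
  have hu1 : 1 ≤ Real.log T := by
    rw [Real.le_log_iff_exp_le hT0]
    have := Real.exp_one_lt_d9
    norm_num at this ⊢
    linarith
  set u := Real.log T with hu
  have hu0 : (0:ℝ) < u := by linarith
  set σ := T / u with hσdef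
  have hσ0 : (0:ℝ) < σ := div_pos hT0 hu0
  have hσ : σ ≠ 0 := ne_of_gt hσ0
  set μ := 3 * T / 2 with hμdef
  set N := ⌊L⌋₊ with hNdef
  have hL0 : (0:ℝ) ≤ L := by linarith
  have hNL : (N:ℝ) ≤ L := Nat.floor_le hL0
  have hN1 : 1 ≤ N := Nat.le_floor (by push_cast; linarith)
  have hN0 : (0:ℝ) < N := by exact_mod_cast Nat.lt_of_lt_of_le Nat.zero_lt_one hN1
  have hNT : (N:ℝ) ≤ T := by
    refine le_trans (le_trans hNL hLT) ?_
    rw [div_le_iff₀ (by positivity)]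
    nlinarith [mul_le_mul_of_nonneg_left (show (1:ℝ) ≤ u^2 by nlinarith) hT0.le]
  set b : ℂ := ((-(1/(2*σ^2)) : ℝ) : ℂ) with hb
  set d : ℂ := ((-(μ^2/(2*σ^2)) : ℝ) : ℂ) with hd
  have hbre : b.re < 0 := by
    rw [hb, Complex.ofReal_re]
    have : (0:ℝ) < 1/(2*σ^2) := by positivity
    linarith
  have hbne : b ≠ 0 := by
    intro h
    rw [h] at hbre
    simp at hbre
  set s : Finset (ℕ × ℕ) := Finset.Icc 1 N ×ˢ Finset.Icc 1 N with hs
  set c : ℕ × ℕ → ℂ :=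
    fun p => ((μ/σ^2 : ℝ):ℂ) + ((Real.log p.2 - Real.log p.1 : ℝ):ℂ)*Complex.I with hc
  set K : ℕ × ℕ → ℂ := fun p => r p.1 * (starRingEnd ℂ) (r p.2) *
    Complex.exp (((-(Real.log p.1 + Real.log p.2)/2 : ℝ):ℂ)) with hK
  set g : ℕ × ℕ → ℝ → ℂ :=
    fun p t => K p * Complex.exp (b * (t:ℂ)^2 + c p * (t:ℂ) + d) with hg
  set F : ℝ → ℂ := fun t => RL r L (1/2 + (t:ℂ)*Complex.I) *
    (starRingEnd ℂ) (RL r L (1/2 + (t:ℂ)*Complex.I)) * ((PhiT T t : ℝ):ℂ) with hF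
  -- pointwise identity
  have hpt : ∀ t : ℝ, F t = ∑ p ∈ s, g p t := by
    intro t
    rw [hF, hs]
    simp only [RL, ← hNdef, PhiT, Phi]
    rw [← hu, ← hσdef, ← hμdef, map_sum, Finset.sum_mul_sum, Finset.sum_product]
    simp only [Finset.sum_mul]
    refine Finset.sum_congr rfl (fun m hm => Finset.sum_congr rfl (fun n hn => ?_))
    simp only [map_mul, hg, hK, hc]
    have h := rlms_term_aux σ μ hσ m n (Finset.mem_Icc.mp hm).1 (Finset.mem_Icc.mp hn).1 t
    rw [hb, hd]
    linear_combination (r m * (starRingEnd ℂ) (r n)) * h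
  -- integrability
  have hgint : ∀ p ∈ s, MeasureTheory.Integrable (g p) := by
    intro p _
    rw [hg]
    exact (integrable_cexp_quadratic' hbre (c p) d).const_mul (K p)
  have hFint : MeasureTheory.Integrable F := by
    rw [show F = fun t => ∑ p ∈ s, g p t from funext hpt]
    exact MeasureTheory.integrable_finset_sum s hgint
  -- value of each integral
  have hval : ∀ p ∈ s, (∫ t : ℝ, g p t) =
      K p * (((Real.pi:ℂ) / -b) ^ (1/2 : ℂ) * Complex.exp (d - (c p)^2/(4*b))) := by
    intro p _
    rw [hg]
    simp only
    rw [integral_const_mul, integral_cexp_quadratic hbre]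
  -- PhiHat0
  have hphipt : ∀ t : ℝ, ((PhiT T t : ℝ):ℂ) =
      Complex.exp (b * (t:ℂ)^2 + ((μ/σ^2 : ℝ):ℂ) * (t:ℂ) + d) := by
    intro t
    simp only [PhiT, Phi]
    rw [← hu, ← hσdef, ← hμdef, hb, hd]
    exact rlms_phi_aux σ μ t hσ
  have h0 : d - ((μ/σ^2 : ℝ):ℂ)^2/(4*b) = 0 := by
    rw [hb, hd]
    have h := rlms_hw_aux σ μ 0 hσ
    simpa using h
  have hPhiHatG : ((PhiHat0 T : ℝ):ℂ) = ((Real.pi:ℂ) / -b) ^ (1/2 : ℂ) := by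
    have h1 : ((PhiHat0 T : ℝ):ℂ) = ∫ t : ℝ, ((PhiT T t : ℝ):ℂ) := by
      rw [PhiHat0]; exact integral_ofReal.symm
    rw [h1]
    simp only [hphipt]
    rw [integral_cexp_quadratic hbre, h0, Complex.exp_zero, mul_one]
  have hGne : ((Real.pi:ℂ) / -b) ^ (1/2 : ℂ) ≠ 0 := by
    intro h
    rcases (Complex.cpow_eq_zero_iff _ _).mp h with ⟨h1, -⟩
    rw [div_eq_zero_iff] at h1
    rcases h1 with h1 | h1
    · exact Real.pi_ne_zero (by exact_mod_cast h1)
    · exact hbne (by simpa using h1)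
  have hPhiHat0nonneg : (0:ℝ) ≤ PhiHat0 T :=
    MeasureTheory.integral_nonneg (fun t => (Real.exp_pos _).le)
  have hPhiHat0pos : (0:ℝ) < PhiHat0 T := by
    rcases lt_or_eq_of_le hPhiHat0nonneg with h | h
    · exact h
    · exfalso; apply hGne; rw [← hPhiHatG, ← h]; simp
  have hval' : ∀ p ∈ s, (∫ t : ℝ, g p t) =
      K p * (((PhiHat0 T : ℝ):ℂ) * Complex.exp (d - (c p)^2/(4*b))) := by
    intro p hp
    rw [hval p hp, hPhiHatG]
  -- nonnegativity of S1
  have hS1nonneg : (0:ℝ) ≤ S1 r L :=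
    Finset.sum_nonneg (fun n _ => by positivity)
  -- diagonal sum
  have hdiag : ∑ p ∈ s.filter (fun p => p.1 = p.2), (∫ t : ℝ, g p t) =
      ((PhiHat0 T * S1 r L : ℝ):ℂ) := by
    have hbij : ∑ p ∈ s.filter (fun p => p.1 = p.2), (∫ t : ℝ, g p t) =
        ∑ m ∈ Finset.Icc 1 N, (∫ t : ℝ, g (m, m) t) := by
      refine Finset.sum_nbij' (fun p => p.1) (fun m => (m, m)) ?_ ?_ ?_ ?_ ?_
      · intro a ha
        exact (Finset.mem_product.mp (Finset.mem_filter.mp ha).1).1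
      · intro a ha
        exact Finset.mem_filter.mpr ⟨Finset.mem_product.mpr ⟨ha, ha⟩, rfl⟩
      · rintro ⟨a1, a2⟩ ha
        have h2 : a1 = a2 := (Finset.mem_filter.mp ha).2
        simp [h2]
      · intro a _; rfl
      · rintro ⟨a1, a2⟩ ha
        have h2 : a1 = a2 := (Finset.mem_filter.mp ha).2
        simp [h2]
    rw [hbij]
    have hterm : ∀ m ∈ Finset.Icc 1 N, (∫ t : ℝ, g (m, m) t) =
        ((‖r m‖^2 / m * PhiHat0 T : ℝ):ℂ) := by
      intro m hm
      have hm1 : 1 ≤ m := (Finset.mem_Icc.mp hm).1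
      have hm0 : (0:ℝ) < m := by exact_mod_cast hm1
      rw [hval' (m, m) (Finset.mem_product.mpr ⟨hm, hm⟩)]
      have hc0 : c (m, m) = ((μ/σ^2 : ℝ):ℂ) := by
        rw [hc]; simp
      rw [hc0, h0, Complex.exp_zero, mul_one, hK]
      simp only
      rw [Complex.mul_conj]
      have hexp : Complex.exp (((-(Real.log m + Real.log m)/2 : ℝ):ℂ)) =
          (((m:ℝ)⁻¹ : ℝ):ℂ) := by
        rw [← Complex.ofReal_exp]
        congr 1
        rw [show -(Real.log m + Real.log m)/2 = -Real.log m by ring, Real.exp_neg,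
          Real.exp_log hm0]
      rw [hexp, ← Complex.sq_norm]
      push_cast
      ring
    rw [Finset.sum_congr rfl hterm, ← Complex.ofReal_sum]
    congr 1
    simp only [S1, ← hNdef, Finset.mul_sum]
    exact Finset.sum_congr rfl (fun x _ => by ring)
  -- off-diagonal bound
  have hwre : ∀ p ∈ s, d - (c p)^2/(4*b) =
      ((-(σ^2*(Real.log p.2 - Real.log p.1)^2/2) : ℝ):ℂ) +
        ((μ*(Real.log p.2 - Real.log p.1) : ℝ):ℂ)*Complex.I := by
    intro p _
    rw [hb, hd, hc]
    exact rlms_hw_aux σ μ _ hσ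
  have hoff : ‖∑ p ∈ s.filter (fun p => ¬ p.1 = p.2), (∫ t : ℝ, g p t)‖ ≤
      (N:ℝ)^2 * (S1 r L * (PhiHat0 T * Real.exp (-(u^2)/2))) := by
    refine le_trans (norm_sum_le _ _) ?_
    have hbound : ∀ p ∈ s.filter (fun p => ¬ p.1 = p.2),
        ‖∫ t : ℝ, g p t‖ ≤ S1 r L * (PhiHat0 T * Real.exp (-(u^2)/2)) := by
      intro p hp
      obtain ⟨hps, hpne⟩ := Finset.mem_filter.mp hp
      obtain ⟨hp1, hp2⟩ := Finset.mem_product.mp hps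
      rw [hval' p hps]
      have ham : ∀ k ∈ Finset.Icc 1 N,
          ‖r k‖ * Real.exp (-Real.log k/2) ≤ Real.sqrt (S1 r L) := by
        intro k hk
        have hk1 : 1 ≤ k := (Finset.mem_Icc.mp hk).1
        have hk0 : (0:ℝ) < k := by exact_mod_cast hk1
        rw [Real.le_sqrt (by positivity) hS1nonneg]
        have hsq : (‖r k‖ * Real.exp (-Real.log k/2))^2
            = ‖r k‖^2 / k := by
          rw [mul_pow, sq (Real.exp _), ← Real.exp_add,
            show -Real.log k/2 + -Real.log k/2 = -Real.log k by ring, Real.exp_neg,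
            Real.exp_log hk0]
          ring
        rw [hsq, show S1 r L = ∑ n ∈ Finset.Icc 1 N, ‖r n‖^2 / n by
          rw [S1, ← hNdef]]
        exact Finset.single_le_sum (f := fun n : ℕ => ‖r n‖^2 / (n:ℝ))
          (fun i _ => by positivity) hk
      have hKb : ‖K p‖ ≤ S1 r L := by
        rw [hK]
        simp only [norm_mul, Complex.norm_conj, Complex.norm_exp, Complex.ofReal_re]
        rw [show -(Real.log p.1 + Real.log p.2)/2
            = -Real.log p.1/2 + -Real.log p.2/2 by ring, Real.exp_add]
        calc ‖r p.1‖ * ‖r p.2‖ *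
              (Real.exp (-Real.log p.1/2) * Real.exp (-Real.log p.2/2))
            = (‖r p.1‖ * Real.exp (-Real.log p.1/2)) *
              (‖r p.2‖ * Real.exp (-Real.log p.2/2)) := by ring
          _ ≤ Real.sqrt (S1 r L) * Real.sqrt (S1 r L) :=
              mul_le_mul (ham _ hp1) (ham _ hp2) (by positivity) (Real.sqrt_nonneg _)
          _ = S1 r L := Real.mul_self_sqrt hS1nonneg
      have hwb : ‖Complex.exp (d - (c p)^2/(4*b))‖ ≤ Real.exp (-(u^2)/2) := by
        rw [hwre p hps, Complex.norm_exp]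
        have hre2 : ((((-(σ^2*(Real.log p.2 - Real.log p.1)^2/2)) : ℝ):ℂ) +
            (((μ*(Real.log p.2 - Real.log p.1)) : ℝ):ℂ)*Complex.I).re
            = -(σ^2*(Real.log p.2 - Real.log p.1)^2/2) := by
          rw [Complex.add_re, Complex.ofReal_re, Complex.mul_re, Complex.ofReal_re,
            Complex.ofReal_im, Complex.I_re, Complex.I_im]
          ring
        rw [hre2]
        apply Real.exp_le_exp.mpr
        have hθ : 1/(N:ℝ) ≤ |Real.log p.2 - Real.log p.1| := by
          rcases lt_or_gt_of_ne hpne with h | h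
          · exact le_trans (rlms_logsep hp1 hp2 h) (le_abs_self _)
          · rw [abs_sub_comm]
            exact le_trans (rlms_logsep hp2 hp1 h) (le_abs_self _)
        have hNu : (N:ℝ) * u^2 ≤ T := by
          have h := le_trans hNL hLT
          rw [le_div_iff₀ (by positivity)] at h
          linarith
        have h1 : u ≤ σ * (1/(N:ℝ)) := by
          rw [hσdef, div_mul_eq_mul_div, mul_one_div, div_div, le_div_iff₀ (by positivity)]
          nlinarith
        have huθ : u ≤ σ * |Real.log p.2 - Real.log p.1| :=
          le_trans h1 (mul_le_mul_of_nonneg_left hθ hσ0.le)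
        have hsq2 : u^2 ≤ σ^2 * (Real.log p.2 - Real.log p.1)^2 := by
          have h2 : u^2 ≤ (σ * |Real.log p.2 - Real.log p.1|)^2 :=
            pow_le_pow_left₀ hu0.le huθ 2
          rw [mul_pow, sq_abs] at h2
          exact h2
        linarith
      have habs : ‖((PhiHat0 T : ℝ):ℂ)‖ = PhiHat0 T := by
        rw [Complex.norm_real, Real.norm_eq_abs, abs_of_pos hPhiHat0pos]
      have heq : ‖K p * (((PhiHat0 T : ℝ):ℂ) *
            Complex.exp (d - (c p)^2/(4*b)))‖
          = ‖K p‖ * (PhiHat0 T *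
            ‖Complex.exp (d - (c p)^2/(4*b))‖) := by
        simp only [norm_mul, habs]
      rw [heq]
      exact mul_le_mul hKb (mul_le_mul_of_nonneg_left hwb hPhiHat0pos.le)
        (mul_nonneg hPhiHat0pos.le (norm_nonneg _)) hS1nonneg
    refine le_trans (Finset.sum_le_card_nsmul _ _ _ hbound) ?_
    rw [nsmul_eq_mul]
    have hcard : (((s.filter (fun p => ¬ p.1 = p.2)).card) : ℝ) ≤ (N:ℝ)^2 := by
      have h1 : (s.filter (fun p => ¬ p.1 = p.2)).card ≤ s.card :=
        Finset.card_filter_le _ _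
      have h2 : s.card = N * N := by
        rw [hs, Finset.card_product, Nat.card_Icc]
        simp
      calc (((s.filter (fun p => ¬ p.1 = p.2)).card) : ℝ) ≤ (s.card : ℝ) := by
            exact_mod_cast h1
        _ = (N:ℝ)^2 := by rw [h2]; push_cast; ring
    exact mul_le_mul_of_nonneg_right hcard (by positivity)
  -- assembly
  have hsplit0 : (∑ p ∈ s, (∫ t : ℝ, g p t)) =
      (∑ p ∈ s.filter (fun p => p.1 = p.2), (∫ t : ℝ, g p t)) +
      ∑ p ∈ s.filter (fun p => ¬ p.1 = p.2), (∫ t : ℝ, g p t) :=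
    (Finset.sum_filter_add_sum_filter_not s (fun p => p.1 = p.2) _).symm
  have hsplit : (∫ t : ℝ, F t) = ((PhiHat0 T * S1 r L : ℝ):ℂ) +
      ∑ p ∈ s.filter (fun p => ¬ p.1 = p.2), (∫ t : ℝ, g p t) := by
    rw [show F = fun t => ∑ p ∈ s, g p t from funext hpt,
      MeasureTheory.integral_finset_sum s hgint, hsplit0, hdiag]
  set E : ℝ := (∑ p ∈ s.filter (fun p => ¬ p.1 = p.2), (∫ t : ℝ, g p t)).re with hE
  have hIeq : (∫ t : ℝ, ‖RL r L (1/2 + (t:ℂ)*Complex.I)‖^2 * PhiT T t)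
      = PhiHat0 T * S1 r L + E := by
    have hre : ∀ t : ℝ, ‖RL r L (1/2 + (t:ℂ)*Complex.I)‖^2 * PhiT T t
        = RCLike.re (F t) := by
      intro t
      rw [RCLike.re_to_complex]
      simp only [hF]
      rw [Complex.mul_conj, ← Complex.ofReal_mul, Complex.ofReal_re, ← Complex.sq_norm]
    simp_rw [hre]
    rw [integral_re hFint, RCLike.re_to_complex, hsplit, Complex.add_re,
      Complex.ofReal_re, ← hE]
  have hEbound : |E| ≤ Real.exp (9/2) / T * (PhiHat0 T * S1 r L) := by
    have h1 : |E| ≤ (N:ℝ)^2 * (S1 r L * (PhiHat0 T * Real.exp (-(u^2)/2))) :=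
      le_trans (Complex.abs_re_le_norm _) hoff
    have h2 : (N:ℝ)^2 * Real.exp (-(u^2)/2) ≤ Real.exp (9/2) / T := by
      have h3 : (N:ℝ)^2 * Real.exp (-(u^2)/2) ≤ T^2 * Real.exp (-(u^2)/2) :=
        mul_le_mul_of_nonneg_right (pow_le_pow_left₀ (Nat.cast_nonneg N) hNT 2)
          (Real.exp_pos _).le
      refine le_trans h3 ?_
      rw [le_div_iff₀ hT0]
      have hTexp : T = Real.exp u := (Real.exp_log hT0).symm
      calc T^2 * Real.exp (-(u^2)/2) * T
          = Real.exp u ^ 2 * Real.exp (-(u^2)/2) * Real.exp u := by rw [← hTexp]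
        _ = Real.exp (u + u + -(u^2)/2 + u) := by
            rw [sq, ← Real.exp_add, ← Real.exp_add, ← Real.exp_add]
        _ ≤ Real.exp (9/2) := Real.exp_le_exp.mpr (by nlinarith [sq_nonneg (u - 3)])
    calc |E| ≤ (N:ℝ)^2 * Real.exp (-(u^2)/2) * (PhiHat0 T * S1 r L) :=
          le_trans h1 (le_of_eq (by ring))
      _ ≤ Real.exp (9/2)/T * (PhiHat0 T * S1 r L) :=
          mul_le_mul_of_nonneg_right h2 (by positivity)
  by_cases hS1 : S1 r L = 0
  · refine ⟨0, by simp only [abs_zero]; positivity, ?_⟩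
    have hE0 : E = 0 := by
      rw [hS1, mul_zero, mul_zero] at hEbound
      exact abs_eq_zero.mp (le_antisymm hEbound (abs_nonneg E))
    rw [hIeq, hS1, hE0]
    ring
  · have hS1pos : 0 < S1 r L := lt_of_le_of_ne hS1nonneg (Ne.symm hS1)
    refine ⟨E / (PhiHat0 T * S1 r L), ?_, ?_⟩
    · rw [abs_div, abs_of_pos (by positivity : (0:ℝ) < PhiHat0 T * S1 r L),
        div_le_iff₀ (by positivity)]
      calc |E| ≤ Real.exp (9/2) / T * (PhiHat0 T * S1 r L) := hEbound
        _ = Real.exp (9/2) / T * (PhiHat0 T * S1 r L) := rfl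
    · rw [hIeq]
      have hP0 : PhiHat0 T ≠ 0 := ne_of_gt hPhiHat0pos
      field_simp



end
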